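/- Let n ≥ 2 and let v ∈ so(n,ℂ) be a matrix with rank(v) = 2 whose spectrum (as a complex n×n matrix) is contained in {λ, −λ, 0} for some λ ∈ ℂ with |λ| = α > 0. Then there exist u, w ∈ so(n,ℂ) with v = u + w and |u| = α such that for every s ∈ ℝ the matrix u + s·w has rank 2 and its spectrum is contained in {μ, −μ, 0} for some μ ∈ ℂ with |μ| = α. -/

import Mathlib

/-!
If `v` has an eigenvalue `μ ≠ 0` with eigenvector `a`, skew-symmetry forces `a ⬝ᵥ a = 0`, and
since `v` has rank two it is a wedge `v = a bᵀ - b aᵀ` with `a ⬝ᵥ b = μ`. Every wedge `a ∧ e` with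
`a ⬝ᵥ a = 0` and `a ⬝ᵥ e = μ` has rank two and spectrum in `{μ, -μ, 0}`, and this condition is
affine in `e`. So take `u = a ∧ c` with `c` the multiple of `conj a` for which `a ⬝ᵥ c = μ`
(isotropy of `a` makes `|u| = |μ|`) and `w = a ∧ (b - c)`. If instead `v` is nilpotent, take
`u = r v` and `w = (1 - r) v` with `r` purely imaginary of modulus `α / |v|`: then
`u + s w = (r + s (1 - r)) v` is a nonzero multiple of `v` for every real `s`.
-/

open Matrix Submodule

theorem finrank_span_pair {K M : Type*} [Field K] [AddCommGroup M] [Module K M] {a b : M}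
    (h : LinearIndependent K ![a, b]) : Module.finrank K (span K {a, b}) = 2 := by
  have := finrank_span_eq_card h
  rwa [Matrix.range_cons_cons_empty, Fintype.card_fin] at this

theorem two_mul_sum_sum_ite_lt {ι R : Type*} [Fintype ι] [LinearOrder ι] [Semiring R]
    {f : ι → ι → R} (hf : ∀ i j, f i j = f j i) (hdiag : ∀ i, f i i = 0) :
    2 * ∑ i, ∑ j, (if i < j then f i j else 0) = ∑ i, ∑ j, f i j := by
  have hsplit : ∀ i j, f i j = (if i < j then f i j else 0) + (if j < i then f j i else 0) := by
    intro i j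
    rcases lt_trichotomy i j with h | rfl | h
    · simp [h, h.not_gt]
    · simp [hdiag]
    · simp [h, h.not_gt, hf i j]
  simp_rw [two_mul, Finset.sum_congr rfl fun i _ => Finset.sum_congr rfl fun j _ => hsplit i j,
    Finset.sum_add_distrib]
  rw [Finset.sum_comm (f := fun i j => if j < i then f j i else 0)]

theorem Complex.add_ofReal_mul_one_sub_ne_zero {r : ℂ} (hr : r.im ≠ 0) (s : ℝ) :
    r + s * (1 - r) ≠ 0 := by
  intro h
  have him : (1 - s) * r.im = 0 := by
    have := congrArg Complex.im h
    simp only [Complex.add_im, Complex.mul_im, Complex.ofReal_re, Complex.ofReal_im,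
      Complex.sub_im, Complex.sub_re, Complex.one_im, Complex.one_re, Complex.zero_im] at this
    linear_combination this
  have hs : s = 1 := by linarith [(mul_eq_zero.1 him).resolve_right hr]
  have := congrArg Complex.re h
  simp [hs] at this

namespace Matrix

variable {ι R K : Type*}

def wedge [CommRing R] (a b : ι → R) : Matrix ι ι R := vecMulVec a b - vecMulVec b a

section CommRing

variable [CommRing R]

theorem transpose_wedge (a b : ι → R) : (wedge a b)ᵀ = -wedge a b := by
  simp [wedge, transpose_vecMulVec]

theorem wedge_add_right (a b c : ι → R) : wedge a (b + c) = wedge a b + wedge a c := by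
  ext i j
  simp only [wedge, add_apply, sub_apply, vecMulVec_apply, Pi.add_apply]
  ring

theorem wedge_smul_right (a b : ι → R) (t : R) : wedge a (t • b) = t • wedge a b := by
  ext i j
  simp only [wedge, smul_apply, sub_apply, vecMulVec_apply, Pi.smul_apply, smul_eq_mul]
  ring

variable [Fintype ι]

theorem wedge_mulVec (a b x : ι → R) :
    wedge a b *ᵥ x = (b ⬝ᵥ x) • a - (a ⬝ᵥ x) • b := by
  simp [wedge, sub_mulVec, vecMulVec_mulVec]

theorem sum_sum_wedge_mul_star [StarRing R] (x y : ι → R) :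
    ∑ i, ∑ j, wedge x y i j * star (wedge x y i j) =
      2 * ((x ⬝ᵥ star x) * (y ⬝ᵥ star y) - (x ⬝ᵥ star y) * (y ⬝ᵥ star x)) := by
  calc ∑ i, ∑ j, wedge x y i j * star (wedge x y i j)
      = ∑ i, ∑ j, ((x i * star (x i)) * (y j * star (y j))
          - (x i * star (y i)) * (y j * star (x j))
          - (y i * star (x i)) * (x j * star (y j))
          + (y i * star (y i)) * (x j * star (x j))) := by
        simp only [wedge, sub_apply, vecMulVec_apply, star_sub, star_mul']
        congr! 2 with i - j -
        ring
    _ = _ := by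
        simp only [Finset.sum_add_distrib, Finset.sum_sub_distrib, ← Finset.sum_mul_sum,
          dotProduct, Pi.star_apply]
        ring

theorem dotProduct_mulVec_eq_neg {v : Matrix ι ι R} (hv : vᵀ = -v) (x y : ι → R) :
    x ⬝ᵥ v *ᵥ y = -(y ⬝ᵥ v *ᵥ x) := by
  rw [dotProduct_mulVec, ← mulVec_transpose, hv, neg_mulVec, neg_dotProduct, dotProduct_comm]

theorem dotProduct_mulVec_eq_neg_mul {v : Matrix ι ι R} (hv : vᵀ = -v)
    {a : ι → R} {μ : R} (ha : v *ᵥ a = μ • a) (y : ι → R) : a ⬝ᵥ v *ᵥ y = -(μ * (a ⬝ᵥ y)) := by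
  rw [dotProduct_mulVec_eq_neg hv, ha, dotProduct_smul, smul_eq_mul, dotProduct_comm]

end CommRing

section Field

variable [Field K] [Fintype ι]

theorem dotProduct_mulVec_self_eq_zero [NeZero (2 : K)] {v : Matrix ι ι K}
    (hv : vᵀ = -v) (x : ι → K) : x ⬝ᵥ v *ᵥ x = 0 := by
  have h := dotProduct_mulVec_eq_neg hv x x
  rw [eq_neg_iff_add_eq_zero, ← two_mul] at h
  simpa [two_ne_zero] using h

theorem dotProduct_self_eq_zero_of_mulVec_eq_smul [NeZero (2 : K)]
    {v : Matrix ι ι K} (hv : vᵀ = -v) {a : ι → K} {μ : K} (hμ : μ ≠ 0) (ha : v *ᵥ a = μ • a) :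
    a ⬝ᵥ a = 0 := by
  have h := dotProduct_mulVec_self_eq_zero hv a
  rw [ha, dotProduct_smul, smul_eq_mul] at h
  simpa [hμ] using h

theorem mem_spectrum_iff_exists_mulVec_eq_smul [DecidableEq ι] {A : Matrix ι ι K}
    {μ : K} : μ ∈ spectrum K A ↔ ∃ x ≠ 0, A *ᵥ x = μ • x := by
  rw [← spectrum_toLin', ← Module.End.hasEigenvalue_iff_mem_spectrum,
    Module.End.hasEigenvalue_iff, Submodule.ne_bot_iff]
  simp [and_comm]

theorem linearIndependent_pair_of_dotProduct {a b : ι → K} (haa : a ⬝ᵥ a = 0)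
    (hab : a ⬝ᵥ b ≠ 0) : LinearIndependent K ![a, b] := by
  have ha : a ≠ 0 := by rintro rfl; simp at hab
  refine (LinearIndependent.pair_iff' ha).2 fun t h => hab ?_
  rw [← h, dotProduct_smul, haa, smul_zero]

theorem range_mulVecLin_eq_span_pair {m : Type*} [Fintype m] {M : Matrix m ι K}
    (hM : M.rank = 2) {a b : m → K}
    (ha : a ∈ LinearMap.range M.mulVecLin) (hb : b ∈ LinearMap.range M.mulVecLin)
    (hab : LinearIndependent K ![a, b]) : LinearMap.range M.mulVecLin = span K {a, b} :=
  (eq_of_le_of_finrank_le (span_le.2 (Set.insert_subset ha (Set.singleton_subset_iff.2 hb)))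
    (by rw [← rank, hM, finrank_span_pair hab])).symm

theorem rank_wedge {a e : ι → K} (haa : a ⬝ᵥ a = 0) (hae : a ⬝ᵥ e ≠ 0) :
    (wedge a e).rank = 2 := by
  have hmem : ∀ x, wedge a e *ᵥ x ∈ span K {a, e} := fun x => by
    rw [wedge_mulVec]
    exact sub_mem (smul_mem _ _ (subset_span (by simp))) (smul_mem _ _ (subset_span (by simp)))
  have ha : a ∈ LinearMap.range (wedge a e).mulVecLin :=
    ⟨(a ⬝ᵥ e)⁻¹ • a, by simp [wedge_mulVec, haa, dotProduct_comm e a, smul_smul, hae]⟩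
  have he : e ∈ LinearMap.range (wedge a e).mulVecLin := by
    have : e = (a ⬝ᵥ e)⁻¹ • ((e ⬝ᵥ e) • a - wedge a e *ᵥ e) := by
      simp [wedge_mulVec, smul_smul, hae]
    have hsub := smul_mem _ (a ⬝ᵥ e)⁻¹ (sub_mem (smul_mem _ (e ⬝ᵥ e) ha) ⟨e, rfl⟩)
    rwa [mulVecLin_apply, ← this] at hsub
  have hrange : LinearMap.range (wedge a e).mulVecLin = span K {a, e} :=
    le_antisymm (by rintro _ ⟨x, rfl⟩; exact hmem x)
      (span_le.2 (Set.insert_subset ha (Set.singleton_subset_iff.2 he)))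
  rw [Matrix.rank, hrange]
  exact finrank_span_pair (linearIndependent_pair_of_dotProduct haa hae)

theorem spectrum_wedge_subset [DecidableEq ι] {a e : ι → K} (haa : a ⬝ᵥ a = 0) :
    spectrum K (wedge a e) ⊆ {a ⬝ᵥ e, -(a ⬝ᵥ e), 0} := by
  intro μ hμ
  obtain ⟨x, hx, hMx⟩ := mem_spectrum_iff_exists_mulVec_eq_smul.1 hμ
  rw [wedge_mulVec] at hMx
  by_cases hμ0 : μ = 0
  · simp [hμ0]
  have hQ : (μ + a ⬝ᵥ e) * (a ⬝ᵥ x) = 0 := by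
    have := congrArg (a ⬝ᵥ ·) hMx
    simp only [dotProduct_sub, dotProduct_smul, smul_eq_mul, haa] at this
    linear_combination -this
  rcases mul_eq_zero.1 hQ with h | hQ0
  · simp [eq_neg_of_add_eq_zero_left h]
  rw [hQ0, zero_smul, sub_zero] at hMx
  have hP : e ⬝ᵥ x ≠ 0 := fun h => hx (by simpa [h, hμ0, eq_comm] using hMx)
  have := congrArg (e ⬝ᵥ ·) hMx
  simp only [dotProduct_smul, smul_eq_mul, dotProduct_comm e a] at this
  simp [mul_right_cancel₀ hP (this.symm.trans (mul_comm _ _))]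

theorem eq_wedge_of_rank_eq_two [NeZero (2 : K)] {v : Matrix ι ι K}
    (hv : vᵀ = -v) (hrank : v.rank = 2) {a y : ι → K} {μ : K} (hμ : μ ≠ 0)
    (ha : v *ᵥ a = μ • a) (hy : a ⬝ᵥ y ≠ 0) :
    v = wedge a (-(a ⬝ᵥ y)⁻¹ • v *ᵥ y) := by
  have haa := dotProduct_self_eq_zero_of_mulVec_eq_smul hv hμ ha
  have hav : ∀ z, a ⬝ᵥ v *ᵥ z = -(μ * (a ⬝ᵥ z)) := dotProduct_mulVec_eq_neg_mul hv ha
  have ha_mem : a ∈ LinearMap.range v.mulVecLin :=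
    ⟨μ⁻¹ • a, by simp [ha, smul_smul, hμ]⟩
  have hrange : LinearMap.range v.mulVecLin = span K {a, v *ᵥ y} :=
    range_mulVecLin_eq_span_pair hrank ha_mem ⟨y, rfl⟩
      (linearIndependent_pair_of_dotProduct haa (by simp [hav, hμ, hy]))
  -- Write `v z = s a + t (v y)`; pairing with `y` and with `a` identifies `s` and `t`.
  refine mulVec_injective (funext fun z => ?_)
  obtain ⟨s, t, hst⟩ := mem_span_pair.1 (hrange ▸ ⟨z, rfl⟩ : v *ᵥ z ∈ span K {a, v *ᵥ y})
  have hs : s * (a ⬝ᵥ y) = -(v *ᵥ y ⬝ᵥ z) := by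
    have := congrArg (y ⬝ᵥ ·) hst
    simp only [dotProduct_add, dotProduct_smul, smul_eq_mul,
      dotProduct_mulVec_self_eq_zero hv, dotProduct_mulVec_eq_neg hv y z] at this
    rw [dotProduct_comm a, dotProduct_comm (v *ᵥ y)]
    linear_combination this
  have ht : t * (a ⬝ᵥ y) = a ⬝ᵥ z := by
    have := congrArg (a ⬝ᵥ ·) hst
    simp only [dotProduct_add, dotProduct_smul, smul_eq_mul, haa, hav] at this
    exact mul_left_cancel₀ hμ (by linear_combination -this)
  rw [wedge_mulVec, ← hst]
  ext i
  simp only [Pi.add_apply, Pi.sub_apply, Pi.smul_apply, smul_eq_mul, smul_dotProduct]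
  field_simp
  linear_combination (a i) * hs + (v *ᵥ y) i * ht

end Field

section Complex

variable [Fintype ι] [LinearOrder ι]

/-- The squared norm `|M|²` of `so(n, ℂ)`. -/
def upperNormSq (M : Matrix ι ι ℂ) : ℝ :=
  ∑ i, ∑ j, if i < j then Complex.normSq (M i j) else 0

theorem two_mul_upperNormSq {M : Matrix ι ι ℂ} (hM : Mᵀ = -M) :
    2 * upperNormSq M = ∑ i, ∑ j, Complex.normSq (M i j) := by
  have hentry : ∀ i j, M j i = -M i j := fun i j => by
    simpa using congrFun (congrFun hM i) j
  refine two_mul_sum_sum_ite_lt (fun i j => ?_) (fun i => ?_)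
  · rw [hentry i j, Complex.normSq_neg]
  · have : M i i = 0 := by linear_combination (1 / 2 : ℂ) * hentry i i
    simp [this]

theorem upperNormSq_smul (c : ℂ) (M : Matrix ι ι ℂ) :
    upperNormSq (c • M) = Complex.normSq c * upperNormSq M := by
  simp [upperNormSq, Finset.mul_sum, Complex.normSq_mul]

theorem upperNormSq_pos {M : Matrix ι ι ℂ} (hM : Mᵀ = -M) (h0 : M ≠ 0) : 0 < upperNormSq M := by
  obtain ⟨i, j, hij⟩ : ∃ i j, M i j ≠ 0 := by
    by_contra! h
    exact h0 (ext h)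
  have : 0 < ∑ i, ∑ j, Complex.normSq (M i j) :=
    Finset.sum_pos' (fun _ _ => Finset.sum_nonneg fun _ _ => Complex.normSq_nonneg _)
      ⟨i, Finset.mem_univ _, Finset.sum_pos' (fun _ _ => Complex.normSq_nonneg _)
        ⟨j, Finset.mem_univ _, Complex.normSq_pos.2 hij⟩⟩
  linarith [two_mul_upperNormSq hM]

theorem upperNormSq_smul_wedge_star {a : ι → ℂ} (haa : a ⬝ᵥ a = 0) (κ : ℂ) :
    upperNormSq (κ • wedge a (star a)) = Complex.normSq (κ * (a ⬝ᵥ star a)) := by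
  rw [upperNormSq_smul, Complex.normSq_mul]
  congr 1
  have hW : ((∑ i, ∑ j, Complex.normSq (wedge a (star a) i j) : ℝ) : ℂ) =
      ((2 * Complex.normSq (a ⬝ᵥ star a) : ℝ) : ℂ) := by
    push_cast
    simp only [← Complex.mul_conj, starRingEnd_apply]
    rw [sum_sum_wedge_mul_star, star_star, haa, zero_mul, sub_zero, dotProduct_comm (star a),
      ← dotProduct_star]
  have := two_mul_upperNormSq (transpose_wedge a (star a))
  linarith [Complex.ofReal_injective hW]

def IsRankTwoSplitting (α : ℝ) (v u w : Matrix ι ι ℂ) : Prop :=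
  uᵀ = -u ∧ wᵀ = -w ∧ v = u + w ∧ upperNormSq u = α ^ 2 ∧
    ∀ s : ℝ, (u + (s : ℂ) • w).rank = 2 ∧
      ∃ μ : ℂ, ‖μ‖ = α ∧ spectrum ℂ (u + (s : ℂ) • w) ⊆ {μ, -μ, 0}

theorem exists_isRankTwoSplitting_of_spectrum_subset_zero {v : Matrix ι ι ℂ} (hv : vᵀ = -v)
    (hrank : v.rank = 2) (hσ : spectrum ℂ v ⊆ {0}) {α : ℝ} (hα : 0 < α) :
    ∃ u w, IsRankTwoSplitting α v u w := by
  have hv0 : v ≠ 0 := by rintro rfl; simp at hrank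
  have hS := upperNormSq_pos hv hv0
  set r : ℂ := Complex.I * (α / √(upperNormSq v) : ℝ)
  have hr : r.im ≠ 0 := by simp [r, hα.ne', (Real.sqrt_pos.2 hS).ne']
  refine ⟨r • v, (1 - r) • v, by simp [hv], by simp [hv],
    by rw [← add_smul, add_sub_cancel, one_smul], ?_, fun s => ?_⟩
  · rw [upperNormSq_smul, Complex.normSq_mul, Complex.normSq_I, Complex.normSq_ofReal,
      div_mul_div_comm, Real.mul_self_sqrt hS.le]
    field_simp
  · have hτ := Complex.add_ofReal_mul_one_sub_ne_zero hr s
    rw [smul_smul, ← add_smul]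
    refine ⟨by rw [rank_smul_of_mem_nonZeroDivisors _ (mem_nonZeroDivisors_of_ne_zero hτ), hrank],
      α, by simp [hα.le], ?_⟩
    rw [show (r + s * (1 - r)) • v = Units.mk0 _ hτ • v from rfl, spectrum.unit_smul_eq_smul]
    rintro _ ⟨μ, hμ, rfl⟩
    simp [Set.mem_singleton_iff.1 (hσ hμ)]

theorem exists_isRankTwoSplitting_of_mem_spectrum {v : Matrix ι ι ℂ} (hv : vᵀ = -v)
    (hrank : v.rank = 2) {μ : ℂ} (hμ : μ ∈ spectrum ℂ v) (hμ0 : μ ≠ 0) :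
    ∃ u w, IsRankTwoSplitting ‖μ‖ v u w := by
  obtain ⟨a, ha0, ha⟩ := mem_spectrum_iff_exists_mulVec_eq_smul.1 hμ
  have haa := dotProduct_self_eq_zero_of_mulVec_eq_smul hv hμ0 ha
  have hd : a ⬝ᵥ star a ≠ 0 := by
    open scoped ComplexOrder in exact dotProduct_self_star_eq_zero.not.2 ha0
  set b := -(a ⬝ᵥ star a)⁻¹ • v *ᵥ star a
  have hvb : v = wedge a b := eq_wedge_of_rank_eq_two hv hrank hμ0 ha hd
  have hab : a ⬝ᵥ b = μ := by
    simp only [b, dotProduct_smul, dotProduct_mulVec_eq_neg_mul hv ha, smul_eq_mul]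
    field_simp
  set c := (μ / (a ⬝ᵥ star a)) • star a
  have hac : a ⬝ᵥ c = μ := by
    simp only [c, dotProduct_smul, smul_eq_mul]
    field_simp
  refine ⟨wedge a c, wedge a (b - c), transpose_wedge _ _, transpose_wedge _ _,
    by rw [← wedge_add_right, add_sub_cancel, hvb], ?_, fun s => ?_⟩
  · rw [wedge_smul_right, upperNormSq_smul_wedge_star haa, div_mul_cancel₀ _ hd,
      Complex.normSq_eq_norm_sq]
  · rw [← wedge_smul_right, ← wedge_add_right]
    have hae : a ⬝ᵥ (c + (s : ℂ) • (b - c)) = μ := by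
      simp [dotProduct_add, dotProduct_smul, dotProduct_sub, hac, hab]
    exact ⟨rank_wedge haa (hae ▸ hμ0), μ, rfl, hae ▸ spectrum_wedge_subset haa⟩

end Complex

end Matrix

theorem stmt8_general (n : ℕ) (v : Matrix (Fin n) (Fin n) ℂ) (hskew : vᵀ = -v)
    (hrank : v.rank = 2) (lam : ℂ) (alpha : ℝ) (hlam : ‖lam‖ = alpha)
    (hpos : 0 < alpha) (hspec : spectrum ℂ v ⊆ {lam, -lam, 0}) :
    ∃ u w : Matrix (Fin n) (Fin n) ℂ,
      uᵀ = -u ∧ wᵀ = -w ∧ v = u + w ∧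
      (∑ i, ∑ j, if i < j then Complex.normSq (u i j) else 0) = alpha ^ 2 ∧
      ∀ s : ℝ, (u + (s : ℂ) • w).rank = 2 ∧
        ∃ mu : ℂ, ‖mu‖ = alpha ∧
          spectrum ℂ (u + (s : ℂ) • w) ⊆ {mu, -mu, 0} := by
  by_cases h : ∃ μ ∈ spectrum ℂ v, μ ≠ 0
  · obtain ⟨μ, hμ, hμ0⟩ := h
    have hμα : ‖μ‖ = alpha := by
      rcases hspec hμ with rfl | rfl | rfl <;> simp_all
    exact hμα ▸ exists_isRankTwoSplitting_of_mem_spectrum hskew hrank hμ hμ0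
  · push Not at h
    exact exists_isRankTwoSplitting_of_spectrum_subset_zero hskew hrank h hpos

/-- if `v ∈ so(n,ℂ)` has rank 2 and spectrum contained in `{λ, −λ, 0}` with
`|λ| = α > 0`, then `v = u + w` with `u, w ∈ so(n,ℂ)`, `|u| = α`, such that for every
`s ∈ ℝ` the matrix `u + s·w` has rank 2 and spectrum contained in some `{μ, −μ, 0}`
with `|μ| = α`. -/
theorem stmt8 (n : ℕ) (hn : 2 ≤ n) (v : Matrix (Fin n) (Fin n) ℂ) (hskew : vᵀ = -v)
    (hrank : v.rank = 2) (lam : ℂ) (alpha : ℝ) (hlam : ‖lam‖ = alpha)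
    (hpos : 0 < alpha) (hspec : spectrum ℂ v ⊆ {lam, -lam, 0}) :
    ∃ u w : Matrix (Fin n) (Fin n) ℂ,
      uᵀ = -u ∧ wᵀ = -w ∧ v = u + w ∧
      (∑ i, ∑ j, if i < j then Complex.normSq (u i j) else 0) = alpha ^ 2 ∧
      ∀ s : ℝ, (u + (s : ℂ) • w).rank = 2 ∧
        ∃ mu : ℂ, ‖mu‖ = alpha ∧
          spectrum ℂ (u + (s : ℂ) • w) ⊆ {mu, -mu, 0} :=
  stmt8_general n v hskew hrank lam alpha hlam hpos hspec
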